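/- Let $Q, P$ be symmetric positive definite matrices (of sizes $n$ and $m$), $N$ an $n\times m$ matrix, and suppose $\mathcal{N} := Q^{-1/2} N P^{-1/2}$ satisfies $\mathcal{N}\mathcal{N}^{\top} \le (1-\delta_1) I$ and $\mathcal{N}^{\top}\mathcal{N} \le (1-\delta_1) I$ for some $\delta_1 \in (0,1]$. Then for all vectors $x \in \mathbb{R}^n$ and $v \in \mathbb{R}^m$: $2 x^{\top} Q x + 2 v^{\top} P v + 4 v^{\top} N^{\top} x \ge \delta_1 \big( x^{\top} Q x + v^{\top} P v \big) \ge \delta_1 \min\{\lambda_{\min}(Q), \lambda_{\min}(P)\} (\|x\|^2 + \|v\|^2)$. -/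

import Mathlib

open Matrix

/-- The smallest eigenvalue of a real symmetric matrix. -/
noncomputable def lamMin {n : Type*} [Fintype n] [DecidableEq n] {A : Matrix n n ℝ}
    (hA : A.IsHermitian) : ℝ := ⨅ i, hA.eigenvalues i

section

open scoped ComplexOrder

/-- The positive semidefinite square root of a positive semidefinite matrix
(as defined in Mathlib of December 2024, since removed). -/
noncomputable def Matrix.PosSemidef.sqrt {n : Type*} {𝕜 : Type*} [RCLike 𝕜] [Fintype n]
    [DecidableEq n] {A : Matrix n n 𝕜} (hA : PosSemidef A) : Matrix n n 𝕜 :=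
  hA.1.eigenvectorUnitary.1 * diagonal ((↑) ∘ (√·) ∘ hA.1.eigenvalues) *
    (star hA.1.eigenvectorUnitary : Matrix n n 𝕜)

end

/-! With `S = Q^{1/2}`, `T = P^{1/2}`, `a = S x` and `b = T v`, the form is
`2‖a‖² + 2‖b‖² + 4⟪𝒩ᵀa, b⟫`, and the hypothesis on `𝒩𝒩ᵀ` says `‖𝒩ᵀa‖² ≤ (1-δ₁)‖a‖²`.
By Cauchy–Schwarz, `4|⟪𝒩ᵀa, b⟫| ≤ 4√(1-δ₁)‖a‖‖b‖ ≤ (2-δ₁)(‖a‖² + ‖b‖²)`, since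
`(2-δ₁)² ≥ 4(1-δ₁)` and `(‖a‖² + ‖b‖²)² ≥ 4‖a‖²‖b‖²`. The second inequality is the Rayleigh
bound `λmin(Q)‖x‖² ≤ xᵀQx`: `Q - λmin(Q) I` is unitarily similar to a nonnegative diagonal
matrix. -/

namespace Matrix

open Unitary

section sqrt

open scoped ComplexOrder

variable {n 𝕜 : Type*} [RCLike 𝕜] [Fintype n] [DecidableEq n] {A : Matrix n n 𝕜}

lemma PosSemidef.sqrt_eq_conjStarAlgAut (hA : A.PosSemidef) :
    hA.sqrt = conjStarAlgAut 𝕜 _ hA.1.eigenvectorUnitary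
      (diagonal (RCLike.ofReal ∘ (√·) ∘ hA.1.eigenvalues)) := by
  rw [conjStarAlgAut_apply]; rfl

lemma PosSemidef.isHermitian_sqrt (hA : A.PosSemidef) : hA.sqrt.IsHermitian := by
  rw [IsHermitian, ← star_eq_conjTranspose, hA.sqrt_eq_conjStarAlgAut, ← map_star]
  congr 1
  rw [star_eq_conjTranspose, diagonal_conjTranspose]
  congr 1
  funext i
  simp

lemma PosSemidef.sqrt_mul_self (hA : A.PosSemidef) : hA.sqrt * hA.sqrt = A := by
  conv_rhs => rw [hA.1.spectral_theorem]
  rw [hA.sqrt_eq_conjStarAlgAut, ← map_mul, diagonal_mul_diagonal]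
  congr 2
  funext i
  simp [← RCLike.ofReal_mul, Real.mul_self_sqrt (hA.eigenvalues_nonneg i)]

lemma PosDef.isUnit_det_sqrt (hA : A.PosDef) : IsUnit hA.posSemidef.sqrt.det := by
  refine isUnit_of_mul_isUnit_left (y := hA.posSemidef.sqrt.det) ?_
  rw [← det_mul, hA.posSemidef.sqrt_mul_self]
  exact hA.isUnit.map detMonoidHom

end sqrt

lemma IsHermitian.posSemidef_sub_smul_one {n : Type*} [Fintype n] [DecidableEq n]
    {A : Matrix n n ℝ} (hA : A.IsHermitian) {c : ℝ} (hc : ∀ i, c ≤ hA.eigenvalues i) :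
    (A - c • 1).PosSemidef := by
  have hconj : A - c • 1 = conjStarAlgAut ℝ _ hA.eigenvectorUnitary
      (diagonal fun i ↦ hA.eigenvalues i - c) := by
    conv_lhs => rw [hA.spectral_theorem]
    rw [← map_one (conjStarAlgAut ℝ _ hA.eigenvectorUnitary), ← map_smul, ← map_sub,
      smul_one_eq_diagonal, diagonal_sub]
    rfl
  rw [hconj, conjStarAlgAut_apply, isUnit_coe.posSemidef_star_right_conjugate_iff,
    posSemidef_diagonal_iff]
  exact fun i ↦ sub_nonneg.2 (hc i)

section real

variable {n m : Type*} [Fintype n] [Fintype m]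

lemma dotProduct_self_nonneg (u : n → ℝ) : 0 ≤ u ⬝ᵥ u := by
  simpa using dotProduct_star_self_nonneg u

lemma dotProduct_sq_le_dotProduct_self_mul (u w : n → ℝ) :
    (u ⬝ᵥ w) ^ 2 ≤ (u ⬝ᵥ u) * (w ⬝ᵥ w) := by
  simpa only [dotProduct, sq] using Finset.sum_mul_sq_le_sq_mul_sq Finset.univ u w

lemma dotProduct_mulVec_of_eq_mul_self {S Q : Matrix n n ℝ} (hS : S.IsSymm) (hSQ : S * S = Q)
    (x : n → ℝ) : x ⬝ᵥ Q *ᵥ x = (S *ᵥ x) ⬝ᵥ (S *ᵥ x) := by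
  rw [← hSQ, ← mulVec_mulVec, dotProduct_mulVec, ← mulVec_transpose, hS.eq]

lemma dotProduct_transpose_mulVec_eq_conj [DecidableEq n] [DecidableEq m] {S : Matrix n n ℝ}
    {T : Matrix m m ℝ} (hS : S.IsSymm) (hSdet : IsUnit S.det) (hTdet : IsUnit T.det)
    (N : Matrix n m ℝ) (x : n → ℝ) (v : m → ℝ) :
    v ⬝ᵥ Nᵀ *ᵥ x = ((S⁻¹ * N * T⁻¹)ᵀ *ᵥ (S *ᵥ x)) ⬝ᵥ (T *ᵥ v) := by
  have hNT : S⁻¹ * N * T⁻¹ * T = S⁻¹ * N := by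
    rw [Matrix.mul_assoc, nonsing_inv_mul T hTdet, Matrix.mul_one]
  calc v ⬝ᵥ Nᵀ *ᵥ x = x ⬝ᵥ N *ᵥ v := by
        rw [mulVec_transpose, dotProduct_comm, dotProduct_mulVec]
    _ = (S *ᵥ x) ⬝ᵥ (S⁻¹ * N) *ᵥ v := by
        rw [← vecMul_transpose S x, hS.eq, ← dotProduct_mulVec, mulVec_mulVec, ← Matrix.mul_assoc,
          mul_nonsing_inv S hSdet, Matrix.one_mul]
    _ = ((S⁻¹ * N * T⁻¹)ᵀ *ᵥ (S *ᵥ x)) ⬝ᵥ (T *ᵥ v) := by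
        rw [mulVec_transpose, ← dotProduct_mulVec, mulVec_mulVec, hNT]

lemma dotProduct_transpose_mulVec_self_le [DecidableEq n] {M : Matrix n m ℝ} {c : ℝ}
    (h : (c • 1 - M * Mᵀ).PosSemidef) (a : n → ℝ) :
    (Mᵀ *ᵥ a) ⬝ᵥ (Mᵀ *ᵥ a) ≤ c * (a ⬝ᵥ a) := by
  have := h.dotProduct_mulVec_nonneg a
  rw [star_trivial, sub_mulVec, dotProduct_sub, smul_mulVec, one_mulVec, dotProduct_smul,
    smul_eq_mul, ← mulVec_mulVec, dotProduct_mulVec, ← mulVec_transpose] at this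
  linarith

end real

end Matrix

open Matrix

lemma lamMin_le_eigenvalues {n : Type*} [Fintype n] [DecidableEq n] {A : Matrix n n ℝ}
    (hA : A.IsHermitian) (i : n) : lamMin hA ≤ hA.eigenvalues i :=
  ciInf_le (Finite.bddBelow_range _) i

lemma lamMin_mul_sum_sq_le {n : Type*} [Fintype n] [DecidableEq n] {A : Matrix n n ℝ}
    (hA : A.IsHermitian) (x : n → ℝ) : lamMin hA * ∑ i, x i ^ 2 ≤ x ⬝ᵥ A *ᵥ x := by
  have := (hA.posSemidef_sub_smul_one (lamMin_le_eigenvalues hA)).dotProduct_mulVec_nonneg x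
  rw [star_trivial, sub_mulVec, dotProduct_sub, smul_mulVec, one_mulVec, dotProduct_smul,
    smul_eq_mul] at this
  simpa [dotProduct, sq] using this

lemma mul_add_le_of_sq_le {A B C δ : ℝ} (hA : 0 ≤ A) (hB : 0 ≤ B) (hδ : δ ≤ 1)
    (hC : C ^ 2 ≤ (1 - δ) * A * B) : δ * (A + B) ≤ 2 * A + 2 * B + 4 * C := by
  have : (4 * C) ^ 2 ≤ ((2 - δ) * (A + B)) ^ 2 := by
    nlinarith [sq_nonneg δ, sq_nonneg (A - B), mul_nonneg hA hB]
  linarith [(abs_le_of_sq_le_sq' this (by nlinarith)).1]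

theorem coercivity_estimate_general {n m : Type*} [Fintype n] [DecidableEq n]
    [Fintype m] [DecidableEq m]
    (Q : Matrix n n ℝ) (P : Matrix m m ℝ) (N : Matrix n m ℝ) (δ1 : ℝ)
    (hQ : Q.PosDef) (hP : P.PosDef) (hδ1 : 0 < δ1) (hδ1' : δ1 ≤ 1)
    (h1 : ((1 - δ1) • (1 : Matrix n n ℝ) -
        ((PosSemidef.sqrt hQ.posSemidef)⁻¹ * N * (PosSemidef.sqrt hP.posSemidef)⁻¹) *
          ((PosSemidef.sqrt hQ.posSemidef)⁻¹ * N * (PosSemidef.sqrt hP.posSemidef)⁻¹)ᵀ).PosSemidef) :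
    ∀ (x : n → ℝ) (v : m → ℝ),
      δ1 * (x ⬝ᵥ Q.mulVec x + v ⬝ᵥ P.mulVec v) ≤
        2 * (x ⬝ᵥ Q.mulVec x) + 2 * (v ⬝ᵥ P.mulVec v) + 4 * (v ⬝ᵥ Nᵀ.mulVec x) ∧
      δ1 * min (lamMin hQ.1) (lamMin hP.1) * ((∑ i, x i ^ 2) + ∑ j, v j ^ 2) ≤
        δ1 * (x ⬝ᵥ Q.mulVec x + v ⬝ᵥ P.mulVec v) := by
  intro x v
  have hS := isHermitian_iff_isSymm.1 hQ.posSemidef.isHermitian_sqrt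
  have hT := isHermitian_iff_isSymm.1 hP.posSemidef.isHermitian_sqrt
  refine ⟨?_, ?_⟩
  · rw [dotProduct_mulVec_of_eq_mul_self hS hQ.posSemidef.sqrt_mul_self,
      dotProduct_mulVec_of_eq_mul_self hT hP.posSemidef.sqrt_mul_self,
      dotProduct_transpose_mulVec_eq_conj hS hQ.isUnit_det_sqrt hP.isUnit_det_sqrt]
    refine mul_add_le_of_sq_le (dotProduct_self_nonneg _) (dotProduct_self_nonneg _) hδ1' ?_
    exact (dotProduct_sq_le_dotProduct_self_mul _ _).trans
      (mul_le_mul_of_nonneg_right (dotProduct_transpose_mulVec_self_le h1 _)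
        (dotProduct_self_nonneg _))
  · rw [mul_assoc, mul_add]
    refine mul_le_mul_of_nonneg_left (add_le_add ?_ ?_) hδ1.le
    · exact (mul_le_mul_of_nonneg_right (min_le_left _ _) (by positivity)).trans
        (lamMin_mul_sum_sq_le hQ.1 x)
    · exact (mul_le_mul_of_nonneg_right (min_le_right _ _) (by positivity)).trans
        (lamMin_mul_sum_sq_le hP.1 v)

/-- Pointwise coercivity: if `𝒩 = Q^{-1/2} N P^{-1/2}` satisfies `𝒩𝒩ᵀ ≤ (1-δ₁) I` and
`𝒩ᵀ𝒩 ≤ (1-δ₁) I`, then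
`2 xᵀQx + 2 vᵀPv + 4 vᵀNᵀx ≥ δ₁ (xᵀQx + vᵀPv) ≥ δ₁ min(λmin Q, λmin P)(‖x‖² + ‖v‖²)`. -/
theorem coercivity_estimate {n m : Type*} [Fintype n] [DecidableEq n] [Nonempty n]
    [Fintype m] [DecidableEq m] [Nonempty m]
    (Q : Matrix n n ℝ) (P : Matrix m m ℝ) (N : Matrix n m ℝ) (δ1 : ℝ)
    (hQ : Q.PosDef) (hP : P.PosDef) (hδ1 : 0 < δ1) (hδ1' : δ1 ≤ 1)
    (h1 : ((1 - δ1) • (1 : Matrix n n ℝ) -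
        ((PosSemidef.sqrt hQ.posSemidef)⁻¹ * N * (PosSemidef.sqrt hP.posSemidef)⁻¹) *
          ((PosSemidef.sqrt hQ.posSemidef)⁻¹ * N * (PosSemidef.sqrt hP.posSemidef)⁻¹)ᵀ).PosSemidef)
    (h2 : ((1 - δ1) • (1 : Matrix m m ℝ) -
        ((PosSemidef.sqrt hQ.posSemidef)⁻¹ * N * (PosSemidef.sqrt hP.posSemidef)⁻¹)ᵀ *
          ((PosSemidef.sqrt hQ.posSemidef)⁻¹ * N * (PosSemidef.sqrt hP.posSemidef)⁻¹)).PosSemidef) :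
    ∀ (x : n → ℝ) (v : m → ℝ),
      δ1 * (x ⬝ᵥ Q.mulVec x + v ⬝ᵥ P.mulVec v) ≤
        2 * (x ⬝ᵥ Q.mulVec x) + 2 * (v ⬝ᵥ P.mulVec v) + 4 * (v ⬝ᵥ Nᵀ.mulVec x) ∧
      δ1 * min (lamMin hQ.1) (lamMin hP.1) * ((∑ i, x i ^ 2) + ∑ j, v j ^ 2) ≤
        δ1 * (x ⬝ᵥ Q.mulVec x + v ⬝ᵥ P.mulVec v) :=
  coercivity_estimate_general Q P N δ1 hQ hP hδ1 hδ1' h1
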